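/- arXiv:1610.09472 — 2 statements merged into one kernel-verified Lean document; each statement's English description precedes it below -/
import Mathlib

section
/- Let ξ be a nondegenerate real random variable with E[ξ] = 0 satisfying Cramér's condition [C₀]. If f is a right-continuous function of locally bounded variation on [0, ∞) with f(0) = 0 and J(f) < ∞, then lim_{t → ∞} f(t)/(1 + t) = 0. -/
/-!
Since `E ξ = 0`, the cumulant generating function `log ψ` has derivative `0` at the origin, so for
every `ε > 0` there is `l > 0` with `log ψ(±l) ≤ ε l`. Testing the suprema defining `Λ`, `λ₊` and
`|λ₋|` at `±l` gives `l |α| ≤ Λ(α) + ε l` and `λ₊, |λ₋| ≥ l`. Splitting `f(t) = ν((0,t])` into its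
absolutely continuous and singular parts then yields `l |f(t)| ≤ J(f) + ε l t` for all `t > 0`,
i.e. `|f(t)| ≤ J(f) / l + ε t`.
-/

open MeasureTheory ProbabilityTheory Filter Set
open scoped ENNReal

/-- The deviation (Cramér / Legendre) function of a real random variable `ξ`:
`Λ(α) = sup { λ·α − log E[e^{λξ}] : λ ∈ ℝ, E[e^{λξ}] < ∞ }`, as a value in `[0, ∞]`. -/
noncomputable def devFn {Ω : Type*} [MeasurableSpace Ω] (μ : Measure Ω) (ξ : Ω → ℝ)
    (α : ℝ) : ℝ≥0∞ :=
  ⨆ (l : ℝ) (_ : Integrable (fun ω => Real.exp (l * ξ ω)) μ),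
    ENNReal.ofReal (l * α - Real.log (∫ ω, Real.exp (l * ξ ω) ∂μ))

/-- `λ₊ = sup{λ : ψ(λ) < ∞}`, viewed in `[0,∞]` (it is positive under `[C₀]`). -/
noncomputable def lamPlus {Ω : Type*} [MeasurableSpace Ω] (μ : Measure Ω) (ξ : Ω → ℝ) : ℝ≥0∞ :=
  ⨆ (l : ℝ) (_ : Integrable (fun ω => Real.exp (l * ξ ω)) μ), ENNReal.ofReal l

/-- `|λ₋| = -inf{λ : ψ(λ) < ∞}`, viewed in `[0,∞]` (it is positive under `[C₀]`). -/
noncomputable def lamMinusAbs {Ω : Type*} [MeasurableSpace Ω] (μ : Measure Ω) (ξ : Ω → ℝ) :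
    ℝ≥0∞ :=
  ⨆ (l : ℝ) (_ : Integrable (fun ω => Real.exp (l * ξ ω)) μ), ENNReal.ofReal (-l)

/-- The functional `J₀^U` evaluated on (the Lebesgue–Stieltjes signed measure `ν` of) a
right-continuous function of bounded variation `f` with `f(0) = 0`, `f(t) = ν((0,t])`:
`J₀^U(f) = ∫₀^U Λ(f_a'(t)) dt + λ₊ · μ_s⁺((0,U]) + |λ₋| · μ_s⁻((0,U])`,
where `f_a'` is the Radon–Nikodym density of `ν` w.r.t. Lebesgue measure and
`μ_s⁺ − μ_s⁻` is the Jordan decomposition of the singular part of `ν`. -/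
noncomputable def J0 {Ω : Type*} [MeasurableSpace Ω] (μ : Measure Ω) (ξ : Ω → ℝ)
    (ν : SignedMeasure ℝ) (U : ℝ) : ℝ≥0∞ :=
  (∫⁻ t in Set.Ioc (0 : ℝ) U, devFn μ ξ (ν.rnDeriv volume t)) +
    lamPlus μ ξ * (ν.singularPart volume).toJordanDecomposition.posPart (Set.Ioc (0 : ℝ) U) +
    lamMinusAbs μ ξ * (ν.singularPart volume).toJordanDecomposition.negPart (Set.Ioc (0 : ℝ) U)

/-- A function `f` with `f(0) = 0` is right-continuous of locally bounded variation on `[0,∞)`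
iff on every interval `[0,U]` it is represented as `f(t) = ν((0,t])` by some (finite)
Lebesgue–Stieltjes signed measure `ν`. -/
def IsLocBV (f : ℝ → ℝ) : Prop :=
  ∀ U : ℝ, 0 < U → ∃ ν : SignedMeasure ℝ, ∀ t ∈ Set.Icc (0 : ℝ) U, f t = ν (Set.Ioc (0 : ℝ) t)

/-- The rate function `J(f) = sup_{U>0} J₀^U(f)`, where `J₀^U(f)` is computed through any
Lebesgue–Stieltjes signed measure representing `f` on `[0,U]`. -/
noncomputable def Jrate {Ω : Type*} [MeasurableSpace Ω] (μ : Measure Ω) (ξ : Ω → ℝ)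
    (f : ℝ → ℝ) : ℝ≥0∞ :=
  ⨆ (U : ℝ) (_ : 0 < U),
    ⨅ (ν : SignedMeasure ℝ) (_ : ∀ t ∈ Set.Icc (0 : ℝ) U, f t = ν (Set.Ioc (0 : ℝ) t)),
      J0 μ ξ ν U

namespace ProbabilityTheory

variable {Ω : Type*} [MeasurableSpace Ω] {μ : Measure Ω} {X : Ω → ℝ}

lemma zero_mem_interior_integrableExpSet {δ : ℝ} (hX : AEMeasurable X μ) (hδ : 0 < δ)
    (h : Integrable (fun ω => Real.exp (δ * |X ω|)) μ) :
    0 ∈ interior (integrableExpSet X μ) := by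
  refine mem_interior_iff_mem_nhds.2 <|
    mem_of_superset (Icc_mem_nhds (neg_lt_zero.2 hδ) hδ) fun t ht => ?_
  refine h.mono (hX.const_mul t).exp.aestronglyMeasurable (ae_of_all _ fun ω => ?_)
  simp only [Real.norm_eq_abs, Real.abs_exp, Real.exp_le_exp]
  calc t * X ω ≤ |t| * |X ω| := by rw [← abs_mul]; exact le_abs_self _
    _ ≤ δ * |X ω| := mul_le_mul_of_nonneg_right (abs_le.2 ht) (abs_nonneg _)

lemma exists_pos_cgf_le_mul [IsZeroOrProbabilityMeasure μ]
    (h0 : 0 ∈ interior (integrableExpSet X μ)) (hmean : μ[X] = 0) {ε : ℝ} (hε : 0 < ε) :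
    ∃ l > 0, l ∈ integrableExpSet X μ ∧ -l ∈ integrableExpSet X μ ∧
      cgf X μ l ≤ ε * l ∧ cgf X μ (-l) ≤ ε * l := by
  have hderiv : HasDerivAt (cgf X μ) 0 0 := by
    have := (analyticAt_cgf h0).differentiableAt.hasDerivAt
    rwa [deriv_cgf_zero h0, hmean, zero_div] at this
  have hsmall : ∀ᶠ t in nhds 0, t ∈ integrableExpSet X μ ∧ |cgf X μ t| ≤ ε * |t| := by
    refine Filter.Eventually.and (mem_interior_iff_mem_nhds.1 h0) ?_
    filter_upwards [hderiv.isLittleO.bound hε] with t ht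
    simpa [cgf_zero] using ht
  obtain ⟨r, hr, hball⟩ := Metric.eventually_nhds_iff.1 hsmall
  have hl : |r / 2| = r / 2 := abs_of_pos (half_pos hr)
  obtain ⟨hpos, hcgf_pos⟩ := hball (y := r / 2) (by rw [Real.dist_0_eq_abs, hl]; linarith)
  obtain ⟨hneg, hcgf_neg⟩ := hball (y := -(r / 2))
    (by rw [Real.dist_0_eq_abs, abs_neg, hl]; linarith)
  rw [hl] at hcgf_pos
  rw [abs_neg, hl] at hcgf_neg
  exact ⟨r / 2, half_pos hr, hpos, hneg, (le_abs_self _).trans hcgf_pos,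
    (le_abs_self _).trans hcgf_neg⟩

end ProbabilityTheory

lemma MeasureTheory.SignedMeasure.apply_eq_singularPart_add_integral_rnDeriv {α : Type*}
    [MeasurableSpace α] (ν : SignedMeasure α) (m : Measure α) [SigmaFinite m] {s : Set α}
    (hs : MeasurableSet s) :
    ν s = ν.singularPart m s + ∫ x in s, ν.rnDeriv m x ∂m := by
  conv_lhs => rw [← ν.singularPart_add_withDensity_rnDeriv_eq m]
  rw [add_apply, withDensityᵥ_apply (ν.integrable_rnDeriv m) hs]

section RateFunction

variable {Ω : Type*} [MeasurableSpace Ω] {μ : Measure Ω} {ξ : Ω → ℝ} {l c : ℝ}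

lemma ofReal_mul_le_devFn_add (hl : l ∈ integrableExpSet ξ μ) (hc : cgf ξ μ l ≤ c) (α : ℝ) :
    ENNReal.ofReal (l * α) ≤ devFn μ ξ α + ENNReal.ofReal c :=
  calc ENNReal.ofReal (l * α) ≤ ENNReal.ofReal (l * α - cgf ξ μ l) + ENNReal.ofReal c :=
        (ENNReal.ofReal_le_ofReal (by linarith)).trans ENNReal.ofReal_add_le
    _ ≤ devFn μ ξ α + ENNReal.ofReal c := by gcongr; exact le_iSup₂_of_le l hl le_rfl

lemma ofReal_mul_enorm_le_devFn_add (hl : 0 ≤ l) (hpos : l ∈ integrableExpSet ξ μ)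
    (hneg : -l ∈ integrableExpSet ξ μ) (hc_pos : cgf ξ μ l ≤ c) (hc_neg : cgf ξ μ (-l) ≤ c)
    (α : ℝ) : ENNReal.ofReal l * ‖α‖ₑ ≤ devFn μ ξ α + ENNReal.ofReal c := by
  rw [Real.enorm_eq_ofReal_abs, ← ENNReal.ofReal_mul hl]
  rcases le_total 0 α with hα | hα
  · rw [abs_of_nonneg hα]
    exact ofReal_mul_le_devFn_add hpos hc_pos α
  · rw [abs_of_nonpos hα, mul_neg, ← neg_mul]
    exact ofReal_mul_le_devFn_add hneg hc_neg α

lemma ofReal_le_lamPlus (hl : l ∈ integrableExpSet ξ μ) : ENNReal.ofReal l ≤ lamPlus μ ξ :=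
  le_iSup₂_of_le l hl le_rfl

lemma ofReal_le_lamMinusAbs (hl : -l ∈ integrableExpSet ξ μ) :
    ENNReal.ofReal l ≤ lamMinusAbs μ ξ :=
  le_iSup₂_of_le (-l) hl (by rw [neg_neg])

lemma ofReal_mul_enorm_le_J0_add (ν : SignedMeasure ℝ) (t : ℝ) (hc : 0 ≤ c)
    (hdev : ∀ α, ENNReal.ofReal l * ‖α‖ₑ ≤ devFn μ ξ α + ENNReal.ofReal c)
    (hplus : ENNReal.ofReal l ≤ lamPlus μ ξ) (hminus : ENNReal.ofReal l ≤ lamMinusAbs μ ξ) :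
    ENNReal.ofReal l * ‖ν (Ioc 0 t)‖ₑ ≤ J0 μ ξ ν t + ENNReal.ofReal (c * t) := by
  set s := ν.singularPart volume
  set g := ν.rnDeriv volume
  have hsing : ENNReal.ofReal l * ‖s (Ioc 0 t)‖ₑ ≤ lamPlus μ ξ *
      s.toJordanDecomposition.posPart (Ioc 0 t) +
        lamMinusAbs μ ξ * s.toJordanDecomposition.negPart (Ioc 0 t) :=
    calc ENNReal.ofReal l * ‖s (Ioc 0 t)‖ₑ ≤ ENNReal.ofReal l * s.totalVariation (Ioc 0 t) :=
          by gcongr; exact s.enorm_le_totalVariation _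
      _ ≤ _ := by
          rw [SignedMeasure.totalVariation, Measure.add_apply, mul_add]
          gcongr
  have hac : ENNReal.ofReal l * ‖∫ x in Ioc 0 t, g x‖ₑ ≤
      (∫⁻ x in Ioc 0 t, devFn μ ξ (g x)) + ENNReal.ofReal (c * t) :=
    calc ENNReal.ofReal l * ‖∫ x in Ioc 0 t, g x‖ₑ
        ≤ ∫⁻ x in Ioc 0 t, ENNReal.ofReal l * ‖g x‖ₑ := by
          rw [lintegral_const_mul' _ _ ENNReal.ofReal_ne_top]
          gcongr
          exact enorm_integral_le_lintegral_enorm _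
      _ ≤ ∫⁻ x in Ioc 0 t, (devFn μ ξ (g x) + ENNReal.ofReal c) := lintegral_mono fun x => hdev _
      _ = (∫⁻ x in Ioc 0 t, devFn μ ξ (g x)) + ENNReal.ofReal (c * t) := by
          rw [lintegral_add_right _ measurable_const, setLIntegral_const, Real.volume_Ioc,
            sub_zero, ← ENNReal.ofReal_mul hc]
  calc ENNReal.ofReal l * ‖ν (Ioc 0 t)‖ₑ
      ≤ ENNReal.ofReal l * ‖s (Ioc 0 t)‖ₑ + ENNReal.ofReal l * ‖∫ x in Ioc 0 t, g x‖ₑ := by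
        rw [ν.apply_eq_singularPart_add_integral_rnDeriv volume measurableSet_Ioc, ← mul_add]
        gcongr
        exact enorm_add_le _ _
    _ ≤ J0 μ ξ ν t + ENNReal.ofReal (c * t) := by
        rw [J0, add_assoc, add_right_comm]
        exact (add_le_add hsing hac).trans_eq (by ring)

lemma mul_abs_le_toReal_Jrate_add {f : ℝ → ℝ} (hJ : Jrate μ ξ f ≠ ⊤) (hl : 0 ≤ l) (hc : 0 ≤ c)
    (hdev : ∀ α, ENNReal.ofReal l * ‖α‖ₑ ≤ devFn μ ξ α + ENNReal.ofReal c)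
    (hplus : ENNReal.ofReal l ≤ lamPlus μ ξ) (hminus : ENNReal.ofReal l ≤ lamMinusAbs μ ξ)
    {t : ℝ} (ht : 0 < t) :
    l * |f t| ≤ (Jrate μ ξ f).toReal + c * t := by
  have hbound : ENNReal.ofReal (l * |f t|) ≤ Jrate μ ξ f + ENNReal.ofReal (c * t) :=
    calc ENNReal.ofReal (l * |f t|)
        ≤ (⨅ (ν : SignedMeasure ℝ) (_ : ∀ u ∈ Icc (0 : ℝ) t, f u = ν (Ioc (0 : ℝ) u)),
            J0 μ ξ ν t) + ENNReal.ofReal (c * t) := by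
          simp only [ENNReal.iInf_add]
          refine le_iInf₂ fun ν hν => ?_
          rw [hν t ⟨ht.le, le_rfl⟩, ENNReal.ofReal_mul hl, ← Real.enorm_eq_ofReal_abs]
          exact ofReal_mul_enorm_le_J0_add ν t hc hdev hplus hminus
      _ ≤ Jrate μ ξ f + ENNReal.ofReal (c * t) := by
          gcongr
          exact le_iSup₂_of_le (f := fun U (_ : 0 < U) => _) t ht le_rfl
  have := ENNReal.toReal_mono (ENNReal.add_ne_top.2 ⟨hJ, ENNReal.ofReal_ne_top⟩) hbound
  rwa [ENNReal.toReal_add hJ ENNReal.ofReal_ne_top, ENNReal.toReal_ofReal (by positivity),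
    ENNReal.toReal_ofReal (by positivity)] at this

end RateFunction

lemma tendsto_div_one_add_atTop_zero {f : ℝ → ℝ}
    (h : ∀ ε > 0, ∃ K, ∀ t > 0, |f t| ≤ K + ε * t) :
    Tendsto (fun t => f t / (1 + t)) atTop (nhds 0) := by
  refine Asymptotics.IsLittleO.tendsto_div_nhds_zero <| Asymptotics.isLittleO_iff.2 fun ε hε => ?_
  obtain ⟨K, hK⟩ := h (ε / 2) (half_pos hε)
  filter_upwards [eventually_gt_atTop 0, eventually_ge_atTop (2 * K / ε)] with t ht hKt
  rw [div_le_iff₀ hε] at hKt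
  rw [Real.norm_eq_abs, Real.norm_eq_abs, abs_of_pos (show 0 < 1 + t by linarith)]
  linarith [hK t ht]

theorem tendsto_zero_of_Jrate_lt_top_general {Ω : Type*} [MeasurableSpace Ω] (μ : Measure Ω)
    [IsProbabilityMeasure μ] (ξ : Ω → ℝ) (hmeas : Measurable ξ)
    (hC0 : ∃ δ > 0, Integrable (fun ω => Real.exp (δ * |ξ ω|)) μ)
    (hmean : ∫ ω, ξ ω ∂μ = 0)
    (f : ℝ → ℝ) (hJ : Jrate μ ξ f ≠ ⊤) :
    Filter.Tendsto (fun t => f t / (1 + t)) Filter.atTop (nhds 0) := by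
  obtain ⟨δ, hδ, hint⟩ := hC0
  have h0 := zero_mem_interior_integrableExpSet hmeas.aemeasurable hδ hint
  refine tendsto_div_one_add_atTop_zero fun ε hε => ?_
  obtain ⟨l, hl, hpos, hneg, hcgf_pos, hcgf_neg⟩ := exists_pos_cgf_le_mul h0 hmean hε
  refine ⟨(Jrate μ ξ f).toReal / l, fun t ht => ?_⟩
  have hbound := mul_abs_le_toReal_Jrate_add hJ hl.le (mul_nonneg hε.le hl.le)
    (ofReal_mul_enorm_le_devFn_add hl.le hpos hneg hcgf_pos hcgf_neg)
    (ofReal_le_lamPlus hpos) (ofReal_le_lamMinusAbs hneg) ht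
  rw [div_add' _ _ _ hl.ne', le_div_iff₀ hl]
  linarith

/-- if `ξ` is nondegenerate, centered and satisfies Cramér's condition `[C₀]`,
and `f` is right-continuous of locally bounded variation on `[0,∞)` with `f(0) = 0` and
`J(f) < ∞`, then `f(t)/(1+t) → 0` as `t → ∞`. -/
theorem tendsto_zero_of_Jrate_lt_top {Ω : Type*} [MeasurableSpace Ω] (μ : Measure Ω)
    [IsProbabilityMeasure μ] (ξ : Ω → ℝ) (hmeas : Measurable ξ)
    (hnondeg : ¬ ∃ c : ℝ, ξ =ᵐ[μ] fun _ => c)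
    (hC0 : ∃ δ > 0, Integrable (fun ω => Real.exp (δ * |ξ ω|)) μ)
    (hmean : ∫ ω, ξ ω ∂μ = 0)
    (f : ℝ → ℝ) (hf : IsLocBV f) (hJ : Jrate μ ξ f ≠ ⊤) :
    Filter.Tendsto (fun t => f t / (1 + t)) Filter.atTop (nhds 0) :=
  tendsto_zero_of_Jrate_lt_top_general μ ξ hmeas hC0 hmean f hJ
end

section
/- Let ξ(t) be a compound Poisson process whose jump variable Y satisfies E[e^{δ|Y|}] < ∞ for some δ > 0 and E[Y] = 0. Then for every ε > 0 there exist constants c > 0 and C < ∞ such that for every integer k ≥ 1, P( sup_{k ≤ v ≤ k+1} |ξ(v)|/v ≥ ε ) ≤ C · e^{−c·k}. -/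
open MeasureTheory ProbabilityTheory Filter Set
open scoped ENNReal

/-- The Poisson counting process `N(t) = #{k ≥ 1 : τ₁ + ⋯ + τ_k ≤ t}` built from the
interarrival times `τ₁, τ₂, …` (here `τ i` is the `(i+1)`-st interarrival time). -/
noncomputable def countProc {Ω : Type*} (τ : ℕ → Ω → ℝ) (t : ℝ) (ω : Ω) : ℕ :=
  Nat.card {k : ℕ | 1 ≤ k ∧ ∑ i ∈ Finset.range k, τ i ω ≤ t}

/-- The compound Poisson process `ξ(t) = Σ_{i=1}^{N(t)} Y_i` with interarrival times `τ`
and jumps `Y`. -/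
noncomputable def cpp {Ω : Type*} (τ Y : ℕ → Ω → ℝ) (t : ℝ) (ω : Ω) : ℝ :=
  ∑ i ∈ Finset.range (countProc τ t ω), Y i ω

/-! On the block `[k, k + 1]` one has `|ξ(v)| / v ≤ max_{n ≤ m} |S_n| / k`, where
`S_n = Y₁ + ⋯ + Y_n`, as soon as the `(m + 1)`-st arrival comes after time `k + 1`. Take `m = A k`
with `A log 2 ≥ 2r + 1`: since `E e^{-rτ} = 1/2`, the Chernoff bound shows that an earlier arrival
has probability at most `e^{-k}`. The exponential moment and `E Y = 0` give
`E e^{sY} ≤ e^{B s²}` for `|s| ≤ δ / 2`, so Chernoff again bounds each `P(|S_n| ≥ εk)`, `n ≤ A k`,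
by `2 e^{-tεk/2}` for a small `t`; the union bound over `n` costs only the factor `A k + 1`. -/

open Real Finset

namespace Real

lemma exp_le_one_add_add_sq_mul_exp_abs (u : ℝ) : exp u ≤ 1 + u + u ^ 2 * exp |u| := by
  have hu2 : u ^ 2 ≤ u ^ 2 * exp |u| :=
    le_mul_of_one_le_right (sq_nonneg u) (one_le_exp (abs_nonneg u))
  rcases le_or_gt |u| 1 with hu | hu
  · linarith [(abs_le.mp (abs_exp_sub_one_sub_id_le hu)).2]
  rcases le_or_gt 0 u with h0 | h0
  · rw [abs_of_nonneg h0] at hu ⊢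
    have : exp u ≤ u ^ 2 * exp u := le_mul_of_one_le_left (exp_pos u).le (by nlinarith)
    linarith
  · rw [abs_of_neg h0] at hu
    nlinarith [exp_le_one_iff.mpr h0.le]

lemma exp_mul_le_one_add_add_sq_mul_exp_abs {δ t : ℝ} (hδ : 0 < δ) (ht : |t| ≤ δ / 2)
    (x : ℝ) : exp (t * x) ≤ 1 + t * x + 16 / δ ^ 2 * t ^ 2 * exp (δ * |x|) := by
  set y := δ / 4 * |x|
  have hy : 0 ≤ y := by positivity
  have h_exp : exp |t * x| ≤ exp (2 * y) := by
    rw [exp_le_exp, abs_mul]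
    calc |t| * |x| ≤ δ / 2 * |x| := by gcongr
      _ = 2 * y := by ring
  have h_sq : x ^ 2 ≤ 16 / δ ^ 2 * exp (2 * y) := by
    have : y ^ 2 ≤ exp (2 * y) := by
      rw [show 2 * y = y + y by ring, exp_add, ← sq]
      gcongr
      linarith [add_one_le_exp y]
    calc x ^ 2 = 16 / δ ^ 2 * y ^ 2 := by rw [← sq_abs x]; field_simp; ring
      _ ≤ 16 / δ ^ 2 * exp (2 * y) := by gcongr
  have h_split : exp (δ * |x|) = exp (2 * y) * exp (2 * y) := by rw [← exp_add]; congr 1; ring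
  calc exp (t * x) ≤ 1 + t * x + (t * x) ^ 2 * exp |t * x| := exp_le_one_add_add_sq_mul_exp_abs _
    _ ≤ 1 + t * x + t ^ 2 * (16 / δ ^ 2 * exp (2 * y)) * exp (2 * y) := by
      rw [mul_pow]; gcongr
    _ = 1 + t * x + 16 / δ ^ 2 * t ^ 2 * exp (δ * |x|) := by rw [h_split]; ring

lemma mul_exp_neg_le {a : ℝ} (ha : 0 < a) (x : ℝ) :
    x * exp (-(a * x)) ≤ 2 / a * exp (-(a / 2 * x)) := by
  have h : a / 2 * x ≤ exp (a / 2 * x) := by linarith [add_one_le_exp (a / 2 * x)]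
  have h_split : exp (a / 2 * x) * exp (-(a * x)) = exp (-(a / 2 * x)) := by
    rw [← exp_add]; ring_nf
  calc x * exp (-(a * x)) = 2 / a * (a / 2 * x) * exp (-(a * x)) := by field_simp
    _ ≤ 2 / a * exp (a / 2 * x) * exp (-(a * x)) := by gcongr
    _ = 2 / a * exp (-(a / 2 * x)) := by rw [mul_assoc, h_split]

lemma exp_neg_add_mul_exp_neg_le {a A k : ℝ} (ha : 0 < a) (hA : 1 ≤ A) (hk : 1 ≤ k) :
    exp (-k) + (A * k + 1) * (2 * exp (-(a * k))) ≤
      (1 + 8 * A / a) * exp (-min 1 (a / 2) * k) := by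
  have h_first : exp (-k) ≤ exp (-(min 1 (a / 2) * k)) := by
    rw [exp_le_exp, neg_le_neg_iff]
    exact mul_le_of_le_one_left (by linarith) (min_le_left _ _)
  have h_second : exp (-(a / 2 * k)) ≤ exp (-(min 1 (a / 2) * k)) := by
    rw [exp_le_exp, neg_le_neg_iff]
    gcongr
    exact min_le_right _ _
  calc exp (-k) + (A * k + 1) * (2 * exp (-(a * k)))
      ≤ exp (-k) + 4 * A * (k * exp (-(a * k))) := by
        have : A * k + 1 ≤ 2 * A * k := by nlinarith
        nlinarith [exp_pos (-(a * k))]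
    _ ≤ exp (-k) + 4 * A * (2 / a * exp (-(a / 2 * k))) := by
        gcongr exp (-k) + 4 * A * ?_
        exact mul_exp_neg_le ha k
    _ ≤ exp (-(min 1 (a / 2) * k)) + 8 * A / a * exp (-(min 1 (a / 2) * k)) := by
        rw [show 4 * A * (2 / a * exp (-(a / 2 * k))) = 8 * A / a * exp (-(a / 2 * k)) by ring]
        gcongr
    _ = (1 + 8 * A / a) * exp (-min 1 (a / 2) * k) := by ring_nf

lemma exp_mul_inv_two_pow_le {r x : ℝ} (hr : 0 ≤ r) (hx : 1 ≤ x) {n : ℕ}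
    (hn : (2 * r + 1) * x ≤ n * log 2) : exp (r * (x + 1)) * 2⁻¹ ^ n ≤ exp (-x) := by
  rw [← exp_log (by norm_num : (0 : ℝ) < 2), ← exp_neg, ← exp_nat_mul, ← exp_add, exp_le_exp]
  nlinarith

end Real

namespace ProbabilityTheory

variable {Ω : Type*} [MeasurableSpace Ω] {μ : Measure Ω}

lemma integrable_exp_mul_of_integrable_exp_mul_abs {X : Ω → ℝ} (hX : AEMeasurable X μ)
    {δ t : ℝ} (ht : |t| ≤ δ) (h_int : Integrable (fun ω ↦ exp (δ * |X ω|)) μ) :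
    Integrable (fun ω ↦ exp (t * X ω)) μ := by
  refine h_int.mono' (hX.const_mul t).exp.aestronglyMeasurable (ae_of_all _ fun ω ↦ ?_)
  rw [norm_of_nonneg (exp_pos _).le, exp_le_exp]
  calc t * X ω ≤ |t| * |X ω| := by rw [← abs_mul]; exact le_abs_self _
    _ ≤ δ * |X ω| := by gcongr

lemma integrable_of_integrable_exp_mul_abs {X : Ω → ℝ} (hX : AEMeasurable X μ) {δ : ℝ}
    (hδ : 0 < δ) (h_int : Integrable (fun ω ↦ exp (δ * |X ω|)) μ) : Integrable X μ := by
  refine (h_int.const_mul δ⁻¹).mono' hX.aestronglyMeasurable (ae_of_all _ fun ω ↦ ?_)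
  rw [norm_eq_abs, le_inv_mul_iff₀ hδ]
  linarith [add_one_le_exp (δ * |X ω|)]

lemma mgf_le_exp_mul_sq_of_integrable_exp_mul_abs [IsProbabilityMeasure μ] {X : Ω → ℝ}
    (hX : AEMeasurable X μ) {δ t : ℝ} (hδ : 0 < δ)
    (h_int : Integrable (fun ω ↦ exp (δ * |X ω|)) μ) (h_mean : μ[X] = 0) (ht : |t| ≤ δ / 2) :
    mgf X μ t ≤ exp (16 * (∫ ω, exp (δ * |X ω|) ∂μ) / δ ^ 2 * t ^ 2) := by
  have h_lin : Integrable (fun ω ↦ 1 + t * X ω) μ :=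
    (integrable_const 1).add ((integrable_of_integrable_exp_mul_abs hX hδ h_int).const_mul t)
  have h_quad : Integrable (fun ω ↦ 16 / δ ^ 2 * t ^ 2 * exp (δ * |X ω|)) μ :=
    h_int.const_mul _
  calc mgf X μ t ≤ ∫ ω, (1 + t * X ω + 16 / δ ^ 2 * t ^ 2 * exp (δ * |X ω|)) ∂μ :=
        integral_mono
          (integrable_exp_mul_of_integrable_exp_mul_abs hX (by linarith [abs_nonneg t]) h_int)
          (h_lin.add h_quad) fun ω ↦ exp_mul_le_one_add_add_sq_mul_exp_abs hδ ht (X ω)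
    _ = 16 * (∫ ω, exp (δ * |X ω|) ∂μ) / δ ^ 2 * t ^ 2 + 1 := by
        rw [integral_add h_lin h_quad, integral_add (integrable_const 1)
          ((integrable_of_integrable_exp_mul_abs hX hδ h_int).const_mul t), integral_const_mul,
          integral_const_mul, h_mean]
        simp only [integral_const, probReal_univ, smul_eq_mul]
        ring
    _ ≤ _ := add_one_le_exp _

lemma iIndepFun.mgf_sum_le_exp {ι : Type*} {X : ι → Ω → ℝ} (h_indep : iIndepFun X μ)
    (h_meas : ∀ i, Measurable (X i)) (s : Finset ι) {t c : ℝ}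
    (h_mgf : ∀ i ∈ s, mgf (X i) μ t ≤ exp c) : mgf (∑ i ∈ s, X i) μ t ≤ exp (#s * c) := by
  rw [h_indep.mgf_sum h_meas, exp_nat_mul, ← prod_const]
  exact prod_le_prod (fun i _ ↦ mgf_nonneg) h_mgf

lemma measureReal_le_abs_le_exp_mul_mgf [IsFiniteMeasure μ] {X : Ω → ℝ} {t : ℝ} (ht : 0 ≤ t)
    (h_int_pos : Integrable (fun ω ↦ exp (t * X ω)) μ)
    (h_int_neg : Integrable (fun ω ↦ exp (-t * X ω)) μ) (x : ℝ) :
    μ.real {ω | x ≤ |X ω|} ≤ exp (-t * x) * (mgf X μ t + mgf X μ (-t)) := by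
  have h_split : {ω | x ≤ |X ω|} ⊆ {ω | x ≤ X ω} ∪ {ω | X ω ≤ -x} := fun ω (hω : x ≤ |X ω|) ↦
    (le_abs'.mp hω).symm
  calc μ.real {ω | x ≤ |X ω|} ≤ μ.real {ω | x ≤ X ω} + μ.real {ω | X ω ≤ -x} :=
        (measureReal_mono h_split).trans (measureReal_union_le _ _)
    _ ≤ exp (-t * x) * mgf X μ t + exp (- -t * -x) * mgf X μ (-t) :=
        add_le_add (measure_ge_le_exp_mul_mgf x ht h_int_pos)
          (measure_le_le_exp_mul_mgf (-x) (neg_nonpos.mpr ht) h_int_neg)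
    _ = exp (-t * x) * (mgf X μ t + mgf X μ (-t)) := by ring_nf

lemma iIndepFun.measureReal_le_abs_sum_le {ι : Type*} {X : ι → Ω → ℝ}
    (h_indep : iIndepFun X μ) (h_meas : ∀ i, Measurable (X i)) {t B : ℝ} (ht : 0 ≤ t)
    (h_int : ∀ i s, |s| ≤ t → Integrable (fun ω ↦ exp (s * X i ω)) μ)
    (h_mgf : ∀ i s, |s| ≤ t → mgf (X i) μ s ≤ exp (B * s ^ 2)) (s : Finset ι) (x : ℝ) :
    μ.real {ω | x ≤ |∑ i ∈ s, X i ω|} ≤ 2 * exp (-t * x + #s * (B * t ^ 2)) := by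
  have := h_indep.isProbabilityMeasure
  have h_sum_int : ∀ u, |u| ≤ t → Integrable (fun ω ↦ exp (u * (∑ i ∈ s, X i) ω)) μ :=
    fun u hu ↦ h_indep.integrable_exp_mul_sum h_meas fun i _ ↦ h_int i u hu
  have h_sum_mgf : ∀ u, |u| = t → mgf (∑ i ∈ s, X i) μ u ≤ exp (#s * (B * t ^ 2)) := by
    intro u hu
    refine h_indep.mgf_sum_le_exp h_meas s fun i _ ↦ ?_
    rw [← hu, sq_abs]
    exact h_mgf i u hu.le
  have h_tail := measureReal_le_abs_le_exp_mul_mgf (X := ∑ i ∈ s, X i) ht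
    (h_sum_int t (abs_of_nonneg ht).le) (h_sum_int (-t) (by rw [abs_neg, abs_of_nonneg ht])) x
  simp only [Finset.sum_apply] at h_tail
  calc _ ≤ _ := h_tail
    _ ≤ exp (-t * x) * (exp (#s * (B * t ^ 2)) + exp (#s * (B * t ^ 2))) := by
      gcongr
      · exact h_sum_mgf t (abs_of_nonneg ht)
      · exact h_sum_mgf (-t) (by rw [abs_neg, abs_of_nonneg ht])
    _ = 2 * exp (-t * x + #s * (B * t ^ 2)) := by rw [exp_add]; ring

lemma expMeasure_eq_withDensity (r : ℝ) : expMeasure r = volume.withDensity (exponentialPDF r) :=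
  rfl

lemma ae_nonneg_expMeasure (r : ℝ) : ∀ᵐ x ∂expMeasure r, 0 ≤ x := by
  simp only [ae_iff, not_le]
  change expMeasure r (Iio 0) = 0
  rw [expMeasure_eq_withDensity, withDensity_apply _ measurableSet_Iio]
  exact lintegral_exponentialPDF_of_nonpos le_rfl

lemma lintegral_exp_neg_mul_expMeasure {r s : ℝ} (hr : 0 < r) (hs : 0 ≤ s) :
    ∫⁻ x, ENNReal.ofReal (exp (-(s * x))) ∂expMeasure r = ENNReal.ofReal (r / (r + s)) := by
  -- `r e^{-rx} e^{-sx}` is `r / (r + s)` times the density of rate `r + s`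
  have h_density : ∀ x, exponentialPDF r x * ENNReal.ofReal (exp (-(s * x))) =
      ENNReal.ofReal (r / (r + s)) * exponentialPDF (r + s) x := by
    intro x
    rcases le_or_gt 0 x with hx | hx
    · rw [exponentialPDF_of_nonneg hx, exponentialPDF_of_nonneg hx,
        ← ENNReal.ofReal_mul (by positivity), ← ENNReal.ofReal_mul (by positivity)]
      congr 1
      field_simp
      rw [← exp_add]
      ring_nf
    · simp [exponentialPDF_of_neg hx]
  have h_meas : ∀ r, Measurable (exponentialPDF r) := fun r ↦
    (measurable_exponentialPDFReal r).ennreal_ofReal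
  rw [expMeasure_eq_withDensity, lintegral_withDensity_eq_lintegral_mul _ (h_meas r) (by fun_prop)]
  simp only [Pi.mul_apply, h_density]
  rw [lintegral_const_mul _ (h_meas _),
    lintegral_exponentialPDF_eq_one (by positivity), mul_one]

lemma mgf_id_expMeasure_neg {r s : ℝ} (hr : 0 < r) (hs : 0 ≤ s) :
    mgf id (expMeasure r) (-s) = r / (r + s) := by
  simp only [mgf, id, neg_mul]
  rw [integral_eq_lintegral_of_nonneg_ae (ae_of_all _ fun _ ↦ (exp_pos _).le) (by fun_prop),
    lintegral_exp_neg_mul_expMeasure hr hs, ENNReal.toReal_ofReal (by positivity)]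

lemma iIndepFun.measureReal_sum_le_le_of_expMeasure {ι : Type*} {τ : ι → Ω → ℝ}
    (h_indep : iIndepFun τ μ) (h_meas : ∀ i, Measurable (τ i)) {r : ℝ} (hr : 0 < r)
    (h_dist : ∀ i, μ.map (τ i) = expMeasure r) {s : ℝ} (hs : 0 ≤ s) (I : Finset ι) (x : ℝ) :
    μ.real {ω | ∑ i ∈ I, τ i ω ≤ x} ≤ exp (s * x) * (r / (r + s)) ^ #I := by
  have := h_indep.isProbabilityMeasure
  have h_mgf : ∀ i, mgf (τ i) μ (-s) = r / (r + s) := fun i ↦ by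
    rw [← mgf_id_map (h_meas i).aemeasurable, h_dist i, mgf_id_expMeasure_neg hr hs]
  have h_int : ∀ i, Integrable (fun ω ↦ exp (-s * τ i ω)) μ := fun i ↦
    mgf_pos_iff.mp (by rw [h_mgf i]; positivity)
  have h_tail := measure_le_le_exp_mul_mgf (X := ∑ i ∈ I, τ i) x (neg_nonpos.mpr hs)
    (h_indep.integrable_exp_mul_sum h_meas fun i _ ↦ h_int i)
  rw [h_indep.mgf_sum h_meas, prod_congr rfl fun i _ ↦ h_mgf i, prod_const, neg_neg] at h_tail
  simpa only [Finset.sum_apply] using h_tail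

lemma iIndepFun.measureReal_sum_le_add_one_le_exp_neg {ι : Type*} {τ : ι → Ω → ℝ}
    (h_indep : iIndepFun τ μ) (h_meas : ∀ i, Measurable (τ i)) {r : ℝ} (hr : 0 < r)
    (h_dist : ∀ i, μ.map (τ i) = expMeasure r) {I : Finset ι} {x : ℝ} (hx : 1 ≤ x)
    (hI : (2 * r + 1) * x ≤ #I * log 2) :
    μ.real {ω | ∑ i ∈ I, τ i ω ≤ x + 1} ≤ exp (-x) := by
  refine (h_indep.measureReal_sum_le_le_of_expMeasure h_meas hr h_dist hr.le I _).trans ?_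
  rw [show r / (r + r) = 2⁻¹ by field_simp; norm_num]
  exact exp_mul_inv_two_pow_le hr.le hx hI

lemma iIndepFun.measureReal_le_abs_sum_le_of_identDistrib {ι : Type*} {Y : ι → Ω → ℝ}
    (h_indep : iIndepFun Y μ) (h_meas : ∀ i, Measurable (Y i)) {j : ι}
    (h_ident : ∀ i, IdentDistrib (Y i) (Y j) μ μ) {δ t : ℝ} (hδ : 0 < δ)
    (h_int : Integrable (fun ω ↦ exp (δ * |Y j ω|)) μ) (h_mean : μ[Y j] = 0) (ht : 0 ≤ t)
    (htδ : t ≤ δ / 2) (s : Finset ι) (x : ℝ) :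
    μ.real {ω | x ≤ |∑ i ∈ s, Y i ω|} ≤
      2 * exp (-t * x + #s * (16 * (∫ ω, exp (δ * |Y j ω|) ∂μ) / δ ^ 2 * t ^ 2)) := by
  have := h_indep.isProbabilityMeasure
  refine h_indep.measureReal_le_abs_sum_le h_meas ht (fun i u hu ↦ ?_) (fun i u hu ↦ ?_) s x
  · refine mgf_pos_iff.1 ((mgf_congr_identDistrib (h_ident i)).symm ▸ mgf_pos ?_)
    exact integrable_exp_mul_of_integrable_exp_mul_abs (h_meas j).aemeasurable
      (by linarith) h_int
  · rw [mgf_congr_identDistrib (h_ident i)]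
    exact mgf_le_exp_mul_sq_of_integrable_exp_mul_abs (h_meas j).aemeasurable hδ h_int h_mean
      (hu.trans htδ)

end ProbabilityTheory

section CompoundPoisson

variable {Ω : Type*} {τ Y : ℕ → Ω → ℝ}

lemma countProc_le_of_lt_sum {ω : Ω} (hτ : ∀ i, 0 ≤ τ i ω) {t : ℝ} {m : ℕ}
    (ht : t < ∑ i ∈ range (m + 1), τ i ω) : countProc τ t ω ≤ m := by
  have h_sub : {k : ℕ | 1 ≤ k ∧ ∑ i ∈ range k, τ i ω ≤ t} ⊆ Set.Icc 1 m := by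
    rintro k ⟨hk1, hk⟩
    refine ⟨hk1, ?_⟩
    by_contra! hmk
    have : ∑ i ∈ range (m + 1), τ i ω ≤ ∑ i ∈ range k, τ i ω :=
      sum_le_sum_of_subset_of_nonneg (range_subset_range.2 hmk) fun i _ _ ↦ hτ i
    linarith
  calc countProc τ t ω ≤ Nat.card (Set.Icc 1 m) := Nat.card_mono (Set.finite_Icc 1 m) h_sub
    _ = m := by simp

lemma exists_le_abs_sum_of_le_iSup_cpp {ω : Ω} (hτ : ∀ i, 0 ≤ τ i ω) {a b ε : ℝ} (ha : 0 < a)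
    {m : ℕ} (hb : b < ∑ i ∈ range (m + 1), τ i ω)
    (hε : ENNReal.ofReal ε ≤ ⨆ v : Icc a b, ENNReal.ofReal (|cpp τ Y v ω| / v)) :
    ∃ n ∈ range (m + 1), ε * a ≤ |∑ i ∈ range n, Y i ω| := by
  obtain ⟨n, hn, h_max⟩ := (range (m + 1)).exists_max_image (fun n ↦ |∑ i ∈ range n, Y i ω|)
    nonempty_range_add_one
  refine ⟨n, hn, ?_⟩
  have h_sup : ⨆ v : Icc a b, ENNReal.ofReal (|cpp τ Y v ω| / v) ≤
      ENNReal.ofReal (|∑ i ∈ range n, Y i ω| / a) := by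
    refine iSup_le fun v ↦ ENNReal.ofReal_le_ofReal ?_
    have h_count := countProc_le_of_lt_sum hτ (v.2.2.trans_lt hb)
    exact div_le_div₀ (abs_nonneg _) (h_max _ (mem_range.2 (Nat.lt_succ_of_le h_count))) ha v.2.1
  rw [← le_div_iff₀ ha]
  exact (ENNReal.ofReal_le_ofReal_iff (by positivity)).1 (hε.trans h_sup)

variable [MeasurableSpace Ω] {μ : Measure Ω}

lemma measureReal_le_iSup_cpp_le [IsFiniteMeasure μ] (hτ : ∀ᵐ ω ∂μ, ∀ i, 0 ≤ τ i ω)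
    {a b : ℝ} (ha : 0 < a) (ε : ℝ) (m : ℕ) :
    μ.real {ω | ENNReal.ofReal ε ≤ ⨆ v : Icc a b, ENNReal.ofReal (|cpp τ Y v ω| / v)} ≤
      μ.real {ω | ∑ i ∈ range (m + 1), τ i ω ≤ b} +
        ∑ n ∈ range (m + 1), μ.real {ω | ε * a ≤ |∑ i ∈ range n, Y i ω|} := by
  have h_sub : {ω | ENNReal.ofReal ε ≤ ⨆ v : Icc a b, ENNReal.ofReal (|cpp τ Y v ω| / v)} ≤ᵐ[μ]
      ({ω | ∑ i ∈ range (m + 1), τ i ω ≤ b} ∪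
        ⋃ n ∈ range (m + 1), {ω | ε * a ≤ |∑ i ∈ range n, Y i ω|} : Set Ω) := by
    filter_upwards [hτ] with ω hτω hω
    by_cases hb : ∑ i ∈ range (m + 1), τ i ω ≤ b
    · exact Or.inl hb
    · obtain ⟨n, hn, h⟩ := exists_le_abs_sum_of_le_iSup_cpp hτω ha (not_le.1 hb) hω
      exact Or.inr (mem_biUnion hn h)
  calc _ ≤ μ.real ({ω | ∑ i ∈ range (m + 1), τ i ω ≤ b} ∪
        ⋃ n ∈ range (m + 1), {ω | ε * a ≤ |∑ i ∈ range n, Y i ω|}) :=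
        ENNReal.toReal_mono (measure_ne_top _ _) (measure_mono_ae h_sub)
    _ ≤ _ := (measureReal_union_le _ _).trans (by gcongr; exact measureReal_biUnion_finset_le _ _)

lemma measureReal_le_iSup_cpp_block_le (hτ_meas : ∀ i, Measurable (τ i))
    (hY_meas : ∀ i, Measurable (Y i)) (hτ_indep : iIndepFun τ μ) (hY_indep : iIndepFun Y μ)
    {r : ℝ} (hr : 0 < r) (hτ_dist : ∀ i, μ.map (τ i) = expMeasure r)
    (hY_ident : ∀ i, IdentDistrib (Y i) (Y 0) μ μ) {δ : ℝ} (hδ : 0 < δ)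
    (hY_int : Integrable (fun ω ↦ exp (δ * |Y 0 ω|)) μ) (hY_mean : μ[Y 0] = 0) {t ε : ℝ}
    (ht : 0 ≤ t) (htδ : t ≤ δ / 2) {A : ℕ}
    (htε : A * (16 * (∫ ω, exp (δ * |Y 0 ω|) ∂μ) / δ ^ 2) * t ≤ ε / 2)
    (hA : 2 * r + 1 ≤ A * log 2) {k : ℕ} (hk : 1 ≤ k) :
    μ.real {ω | ENNReal.ofReal ε ≤ ⨆ v : Icc (k : ℝ) (k + 1), ENNReal.ofReal (|cpp τ Y v ω| / v)} ≤
      exp (-k) + (A * k + 1) * (2 * exp (-(t * ε / 2 * k))) := by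
  have := hτ_indep.isProbabilityMeasure
  set B := 16 * (∫ ω, exp (δ * |Y 0 ω|) ∂μ) / δ ^ 2
  have hk1 : (1 : ℝ) ≤ k := Nat.one_le_cast.2 hk
  have hτ_nonneg : ∀ᵐ ω ∂μ, ∀ i, 0 ≤ τ i ω := ae_all_iff.2 fun i ↦
    ae_of_ae_map (hτ_meas i).aemeasurable (hτ_dist i ▸ ae_nonneg_expMeasure r)
  have h_arrival : μ.real {ω | ∑ i ∈ range (A * k + 1), τ i ω ≤ k + 1} ≤ exp (-k) := by
    refine hτ_indep.measureReal_sum_le_add_one_le_exp_neg hτ_meas hr hτ_dist hk1 ?_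
    rw [card_range]
    push_cast
    nlinarith [mul_le_mul_of_nonneg_right hA (Nat.cast_nonneg k : (0 : ℝ) ≤ k),
      log_pos one_lt_two]
  have h_jump (n : ℕ) (hn : n ∈ range (A * k + 1)) :
      μ.real {ω | ε * k ≤ |∑ i ∈ range n, Y i ω|} ≤ 2 * exp (-(t * ε / 2 * k)) := by
    refine (hY_indep.measureReal_le_abs_sum_le_of_identDistrib hY_meas hY_ident hδ hY_int
      hY_mean ht htδ _ _).trans ?_
    have hn' : (n : ℝ) ≤ A * k := by exact_mod_cast Nat.lt_succ_iff.1 (mem_range.1 hn)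
    rw [card_range]
    gcongr
    calc -t * (ε * k) + n * (B * t ^ 2) ≤ -t * (ε * k) + A * B * t * (k * t) := by
          nlinarith [mul_le_mul_of_nonneg_right hn' (by positivity : 0 ≤ B * t ^ 2)]
      _ ≤ -t * (ε * k) + ε / 2 * (k * t) := by gcongr
      _ = -(t * ε / 2 * k) := by ring
  calc _ ≤ _ := measureReal_le_iSup_cpp_le hτ_nonneg (by positivity : (0 : ℝ) < k) ε (A * k)
    _ ≤ exp (-k) + ∑ n ∈ range (A * k + 1), 2 * exp (-(t * ε / 2 * k)) :=
        add_le_add h_arrival (sum_le_sum h_jump)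
    _ = _ := by rw [sum_const, card_range, nsmul_eq_mul]; push_cast; ring

end CompoundPoisson

/-- for a compound Poisson process `ξ(t)` whose centered jump variable has a
finite exponential moment, for every `ε > 0` there are `c > 0` and `C < ∞` such that for every
integer `k ≥ 1`, `P(sup_{k ≤ v ≤ k+1} |ξ(v)|/v ≥ ε) ≤ C·e^{−c·k}`.
(The supremum is taken in `[0,∞]`.) -/
theorem cpp_block_sup_bound {Ω : Type*} [MeasurableSpace Ω] (μ : Measure Ω)
    [IsProbabilityMeasure μ] (τ Y : ℕ → Ω → ℝ) (r : ℝ) (hr : 0 < r)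
    (hτmeas : ∀ i, Measurable (τ i)) (hYmeas : ∀ i, Measurable (Y i))
    (hindep : iIndepFun (Sum.elim τ Y) μ)
    (hτdist : ∀ i, Measure.map (τ i) μ = expMeasure r)
    (hYdist : ∀ i, Measure.map (Y i) μ = Measure.map (Y 0) μ)
    (hC0 : ∃ δ > 0, Integrable (fun ω => Real.exp (δ * |Y 0 ω|)) μ)
    (hmean : ∫ ω, Y 0 ω ∂μ = 0) :
    ∀ ε : ℝ, 0 < ε → ∃ c > (0 : ℝ), ∃ C : ℝ, ∀ k : ℕ, 1 ≤ k →
      μ {ω | ENNReal.ofReal ε ≤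
          ⨆ v : Set.Icc (k : ℝ) ((k : ℝ) + 1), ENNReal.ofReal (|cpp τ Y v ω| / v)} ≤
        ENNReal.ofReal (C * Real.exp (-c * k)) := by
  obtain ⟨δ, hδ, hY_int⟩ := hC0
  intro ε hε
  set B := 16 * (∫ ω, exp (δ * |Y 0 ω|) ∂μ) / δ ^ 2
  have hB : 0 < B := by have := integral_exp_pos hY_int; positivity
  obtain ⟨A, hA⟩ : ∃ A : ℕ, 2 * r + 1 ≤ A * log 2 :=
    ⟨⌈(2 * r + 1) / log 2⌉₊, (div_le_iff₀ (log_pos one_lt_two)).1 (Nat.le_ceil _)⟩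
  have hA1 : (1 : ℝ) ≤ A := Nat.one_le_cast.2 <| Nat.pos_of_ne_zero fun h ↦ by
    rw [h, Nat.cast_zero, zero_mul] at hA; linarith
  set t := min (δ / 2) (ε / (2 * A * B))
  have ht : 0 < t := by positivity
  have htε : A * B * t ≤ ε / 2 := by
    have := min_le_right (δ / 2) (ε / (2 * A * B))
    rw [le_div_iff₀ (by positivity)] at this
    linarith
  refine ⟨min 1 (t * ε / 2 / 2), by positivity, 1 + 8 * A / (t * ε / 2), fun k hk ↦ ?_⟩
  rw [← ofReal_measureReal]
  refine ENNReal.ofReal_le_ofReal ((measureReal_le_iSup_cpp_block_le hτmeas hYmeas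
    (hindep.precomp (g := Sum.inl) Sum.inl_injective)
    (hindep.precomp (g := Sum.inr) Sum.inr_injective) hr hτdist
    (fun i ↦ ⟨(hYmeas i).aemeasurable, (hYmeas 0).aemeasurable, hYdist i⟩) hδ hY_int hmean
    ht.le (min_le_left _ _) htε hA hk).trans ?_)
  exact exp_neg_add_mul_exp_neg_le (by positivity) hA1 (Nat.one_le_cast.2 hk)
end
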